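/- Let l, m ∈ ℕ with l ≥ 1 and m ≥ 1, and let z ∈ ℂ⁻ with exp_l(m²·π) < |z|. Then |log^{[l]}(z)| < |z|^{1/(2^l·m)}. (Claim 1 in the proof of Proposition 5.81 of the paper.) -/

import Mathlib

/-!
For `L = log |z|` one has `|log z|² = L² + arg² z < 2 L²` once `L > π`, and
`√2 · L ≤ exp (L / (2μ)) = |z| ^ (1 / (2μ))` as soon as `L > μ² π`, using
`exp t ≥ (e t / 2)²` and the numerical fact `16 √2 < π e²`. This is the case `l = 1`.
For the induction step, `|log z| ≥ log |z| > exp_{l-1} (μ² π)`, so the induction hypothesis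
applies to `log z`, and `|log z| < |z| ^ (1/2)` by the case `l = 1, μ = 1`.
-/

/-- The `j`-fold iterate `log^{[j]}` of the principal complex logarithm. -/
noncomputable def logIter : ℕ → ℂ → ℂ
  | 0, w => w
  | j + 1, w => Complex.log (logIter j w)

/-- The `j`-fold iterated real exponential `exp_j`. -/
noncomputable def expIter : ℕ → ℝ → ℝ
  | 0, x => x
  | j + 1, x => Real.exp (expIter j x)

open Real

lemma logIter_succ' (j : ℕ) (z : ℂ) : logIter (j + 1) z = logIter j (Complex.log z) := by
  induction j with
  | zero => rfl
  | succ k ih => exact congrArg Complex.log ih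

lemma le_expIter (j : ℕ) (x : ℝ) : x ≤ expIter j x := by
  induction j with
  | zero => exact le_rfl
  | succ k ih => exact ih.trans ((le_add_of_nonneg_right zero_le_one).trans (add_one_le_exp _))

lemma sixteen_mul_sqrt_two_lt_pi_mul_exp_one_sq : 16 * √2 < π * exp 1 ^ 2 := by
  have hsqrt : √2 < 1.4143 := by
    rw [sqrt_lt' (by norm_num)]
    norm_num
  have he : 2.718 < exp 1 := exp_one_gt_d9.trans' (by norm_num)
  nlinarith [pi_gt_d2]

lemma sq_exp_one_mul_half_le_exp {t : ℝ} (ht : 0 ≤ t) : (exp 1 * t / 2) ^ 2 ≤ exp t := by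
  have h : exp 1 * (t / 2) ≤ exp (t / 2) := by
    calc exp 1 * (t / 2) ≤ exp 1 * exp (t / 2 - 1) := by
          gcongr
          linarith [add_one_le_exp (t / 2 - 1)]
      _ = exp (t / 2) := by rw [← exp_add]; ring_nf
  calc (exp 1 * t / 2) ^ 2 = (exp 1 * (t / 2)) ^ 2 := by ring
    _ ≤ exp (t / 2) ^ 2 := by gcongr
    _ = exp t := by rw [← exp_nat_mul]; ring_nf

lemma log_norm_le_norm_log (z : ℂ) : log ‖z‖ ≤ ‖Complex.log z‖ := by
  rw [← Complex.log_re]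
  exact Complex.re_le_norm _

lemma norm_log_lt_sqrt_two_mul_log_norm {z : ℂ} (hz : π < log ‖z‖) :
    ‖Complex.log z‖ < √2 * log ‖z‖ := by
  have harg : Complex.arg z ^ 2 ≤ π ^ 2 :=
    sq_le_sq' (Complex.neg_pi_lt_arg z).le (Complex.arg_le_pi z)
  refine lt_of_pow_lt_pow_left₀ 2 (mul_nonneg (sqrt_nonneg 2) (pi_pos.trans hz).le) ?_
  rw [Complex.sq_norm, Complex.normSq_apply, Complex.log_re, Complex.log_im, mul_pow,
    sq_sqrt zero_le_two]
  nlinarith [mul_self_lt_mul_self pi_pos.le hz]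

lemma norm_log_lt_rpow {μ : ℝ} (hμ : 1 ≤ μ) {z : ℂ} (hz : exp (μ ^ 2 * π) < ‖z‖) :
    ‖Complex.log z‖ < ‖z‖ ^ (1 / (2 * μ)) := by
  have hz0 : 0 < ‖z‖ := (exp_pos _).trans hz
  set L := log ‖z‖
  have hL : μ ^ 2 * π < L := (lt_log_iff_exp_lt hz0).2 hz
  have hπL : π < L := (le_mul_of_one_le_left pi_pos.le (one_le_pow₀ hμ)).trans_lt hL
  set t := L / (2 * μ) with ht_def
  have hLt : L = 2 * μ * t := by rw [ht_def]; field_simp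
  have ht : μ * π < 2 * t := by nlinarith
  have ht0 : 0 < t := by nlinarith [pi_pos]
  calc ‖Complex.log z‖ < √2 * L := norm_log_lt_sqrt_two_mul_log_norm hπL
    _ ≤ (exp 1 * t / 2) ^ 2 := by
        have hμ0 : 0 < μ := zero_lt_one.trans_le hμ
        have : 16 * √2 * μ < 2 * exp 1 ^ 2 * t := by
          nlinarith [sixteen_mul_sqrt_two_lt_pi_mul_exp_one_sq, exp_pos 1]
        rw [hLt]
        nlinarith
    _ ≤ exp t := sq_exp_one_mul_half_le_exp ht0.le
    _ = ‖z‖ ^ (1 / (2 * μ)) := by rw [rpow_def_of_pos hz0, ht_def, div_eq_mul_one_div]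

lemma norm_logIter_lt_rpow {l : ℕ} (hl : 1 ≤ l) {μ : ℝ} (hμ : 1 ≤ μ) {z : ℂ}
    (hz : expIter l (μ ^ 2 * π) < ‖z‖) :
    ‖logIter l z‖ < ‖z‖ ^ (1 / (2 ^ l * μ)) := by
  induction l, hl using Nat.le_induction generalizing z with
  | base => simpa [logIter, expIter] using norm_log_lt_rpow hμ hz
  | succ n _ ih =>
    have hz0 : 0 < ‖z‖ := (exp_pos _).trans hz
    have hlog : expIter n (μ ^ 2 * π) < ‖Complex.log z‖ :=
      ((lt_log_iff_exp_lt hz0).2 hz).trans_le (log_norm_le_norm_log z)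
    have hπ : exp (1 ^ 2 * π) < ‖z‖ := by
      refine lt_of_le_of_lt (exp_le_exp.2 ?_) hz
      calc 1 ^ 2 * π ≤ μ ^ 2 * π := by gcongr
        _ ≤ expIter n (μ ^ 2 * π) := le_expIter n _
    have hhalf : ‖Complex.log z‖ < ‖z‖ ^ (1 / 2 : ℝ) := by
      simpa using norm_log_lt_rpow le_rfl hπ
    calc ‖logIter (n + 1) z‖ = ‖logIter n (Complex.log z)‖ := by rw [logIter_succ']
      _ < ‖Complex.log z‖ ^ (1 / (2 ^ n * μ)) := ih hlog
      _ ≤ (‖z‖ ^ (1 / 2 : ℝ)) ^ (1 / (2 ^ n * μ)) := by gcongr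
      _ = ‖z‖ ^ (1 / (2 ^ (n + 1) * μ)) := by
        rw [← rpow_mul hz0.le]
        congr 1
        field_simp
        ring

theorem abs_logIter_lt_rpow_general (l m : ℕ) (hl : 1 ≤ l) (hm : 1 ≤ m) (z : ℂ)
    (hzabs : expIter l ((m : ℝ) ^ 2 * Real.pi) < ‖z‖) :
    ‖logIter l z‖ < ‖z‖ ^ (1 / (2 ^ l * m) : ℝ) :=
  norm_logIter_lt_rpow hl (by exact_mod_cast hm) hzabs

/-- **Claim 1** in the proof of Proposition 5.81: let `l, m ≥ 1` and `z ∈ ℂ⁻` with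
`exp_l (m² · π) < |z|`. Then `|log^{[l]} z| < |z| ^ (1 / (2^l · m))` (real power of
the positive real `|z|`). -/
theorem abs_logIter_lt_rpow (l m : ℕ) (hl : 1 ≤ l) (hm : 1 ≤ m) (z : ℂ)
    (hz : z ∈ Complex.slitPlane)
    (hzabs : expIter l ((m : ℝ) ^ 2 * Real.pi) < ‖z‖) :
    ‖logIter l z‖ < ‖z‖ ^ (1 / (2 ^ l * m) : ℝ) :=
  abs_logIter_lt_rpow_general l m hl hm z hzabs
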